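/- arXiv:1112.0104 — 2 statements merged into one kernel-verified Lean document; each statement's English description precedes it below -/
import Mathlib

section
/- Suppose ℙ satisfies the 'usual conditions'. For u ∈ L²_cov, u is orthogonal to L²_∇ if and only if div(ωu)(ω) := Σ_{x∈N} ω_{0,x}[u(ω,x) − u(τ_xω,−x)] = 0 for ℙ-almost every ω. In particular, if N generates ℤ^d and U: Ω×ℤ^d → ℝ^d is the unique extension of u to ℤ^d (U(ω,0) = 0 and U(ω,x+z) − U(ω,x) = u(τ_xω,z) for all x∈ℤ^d, z∈N), then L_ωU(ω,x) := Σ_y ω_{xy}[U(ω,y) − U(ω,x)] = 0 for all x∈ℤ^d and ℙ-almost every ω. -/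
open MeasureTheory Filter Topology Set
open scoped ENNReal NNReal

noncomputable section

namespace RCM

/-- Vertices of the lattice `ℤ^d`. -/
abbrev V (d : ℕ) := Fin d → ℤ

/-- Euclidean norm of a vector in `ℝ^d`. -/
def rnorm {d : ℕ} (y : Fin d → ℝ) : ℝ := Real.sqrt (∑ i, (y i) ^ 2)

/-- The canonical embedding `ℤ^d → ℝ^d`. -/
def toR {d : ℕ} (x : V d) : Fin d → ℝ := fun i => (x i : ℝ)

/-- Euclidean norm of a lattice vector. -/
def vnorm {d : ℕ} (x : V d) : ℝ := rnorm (toR x)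

/-- The `i`-th coordinate unit vector of `ℤ^d`. -/
def unit {d : ℕ} (i : Fin d) : V d := fun j => if j = i then 1 else 0

/-- Nearest-neighbour adjacency on `ℤ^d`. -/
def adj {d : ℕ} (x y : V d) : Prop := (∑ i, |x i - y i|) = 1

/-- A configuration of conductances on `ℤ^d`: nonnegative, symmetric, with
`π_ω(x) = ∑_y ω_{xy} ∈ (0,∞)` for every `x`. -/
structure Cfg (d : ℕ) where
  w : V d → V d → ℝ
  nonneg : ∀ x y, 0 ≤ w x y
  symm : ∀ x y, w x y = w y x
  summ : ∀ x, Summable fun y => w x y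
  pos : ∀ x, 0 < ∑' y, w x y

variable {d : ℕ}

/-- The product σ-algebra on the space of conductance configurations. -/
instance : MeasurableSpace (Cfg d) := MeasurableSpace.comap Cfg.w inferInstance

/-- `π_ω(x) := ∑_y ω_{xy}`. -/
def piC (ω : Cfg d) (x : V d) : ℝ := ∑' y, ω.w x y

/-- The one-step transition probabilities `P_ω(x,y) = ω_{xy}/π_ω(x)` of the random walk
among the conductances `ω`. -/
def step (ω : Cfg d) (x y : V d) : ℝ := ω.w x y / piC ω x

/-- `n`-step transition probabilities `P_ω^n(x,y)`. -/
def Pn (ω : Cfg d) : ℕ → V d → V d → ℝ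
  | 0, x, y => if x = y then 1 else 0
  | n + 1, x, y => ∑' z, Pn ω n x z * step ω z y

/-- The shift `τ_z` acting on configurations: `(τ_zω)_{xy} = ω_{x+z,y+z}`. -/
def shiftC (z : V d) (ω : Cfg d) : Cfg d where
  w x y := ω.w (x + z) (y + z)
  nonneg x y := ω.nonneg _ _
  symm x y := ω.symm _ _
  summ x := by
    have h := (Equiv.addRight z).summable_iff (f := fun y => ω.w (x + z) y)
    exact h.mpr (ω.summ (x + z))
  pos x := by
    have h := (Equiv.addRight z).tsum_eq (f := fun y => ω.w (x + z) y)
    simp only [Equiv.coe_addRight] at h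
    calc (0:ℝ) < ∑' y, ω.w (x + z) y := ω.pos (x + z)
    _ = ∑' y, ω.w (x + z) (y + z) := h.symm

/-- The law of the discrete-time random walk among the conductances `ω` started at `x₀`,
characterized through its cylinder probabilities. -/
def IsPathLaw (ω : Cfg d) (x₀ : V d) (μ : Measure (ℕ → V d)) : Prop :=
  IsProbabilityMeasure μ ∧
  ∀ (n : ℕ) (p : ℕ → V d),
    μ {X | ∀ i ≤ n, X i = p i} =
      ENNReal.ofReal ((if p 0 = x₀ then (1:ℝ) else 0) *
        ∏ i ∈ Finset.range n, step ω (p i) (p (i + 1)))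

/-- The measure `ℚ(dω) = Z⁻¹ π_ω(0) ℙ(dω)`. -/
def Qmeas (P : Measure (Cfg d)) : Measure (Cfg d) :=
  (ENNReal.ofReal (∫ ω, piC ω 0 ∂P))⁻¹ •
    P.withDensity fun ω => ENNReal.ofReal (piC ω 0)

/-- Bounded measurable real functions on the space of environments. -/
def BddMeas (f : Cfg d → ℝ) : Prop := Measurable f ∧ ∃ C, ∀ ω, |f ω| ≤ C

/-- The "usual conditions" on an environment law: a translation-invariant probability
measure with `𝔼 π_ω(0) < ∞`, irreducible, and ergodic with respect to translations. -/
structure UsualConds (P : Measure (Cfg d)) : Prop where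
  prob : IsProbabilityMeasure P
  inv : ∀ z : V d, MeasurePreserving (shiftC z) P P
  integ : Integrable (fun ω => piC ω 0) P
  irred : ∀ x : V d, P {ω | ∃ n, 0 < Pn ω n 0 x} = 1
  erg : ∀ A : Set (Cfg d), MeasurableSet A → (∀ z, shiftC z ⁻¹' A = A) → P A = 0 ∨ P A = 1

/-- The transition kernel `𝒫` of the environment seen from the particle, applied to a
function `g`: `(𝒫 g)(ω) = ∑_x P_ω(0,x) g(τ_x ω)`. -/
def envK (g : Cfg d → ℝ) (ω : Cfg d) : ℝ := ∑' x, step ω 0 x * g (shiftC x ω)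

/-- A local function of the environment: a bounded continuous function of finitely many
conductances. -/
def IsLocal (φ : Cfg d → (Fin d → ℝ)) : Prop :=
  (∃ C, ∀ ω, rnorm (φ ω) ≤ C) ∧
  ∃ (S : Finset (V d × V d)) (g : ((V d × V d) → ℝ) → Fin d → ℝ),
    Continuous g ∧ ∀ ω, φ ω = g fun e => if e ∈ S then ω.w e.1 e.2 else 0

/-- The gradient `∇φ(ω,x) := φ(τ_xω) − φ(ω)` of a function of the environment. -/
def grad (φ : Cfg d → (Fin d → ℝ)) (ω : Cfg d) (x : V d) : Fin d → ℝ :=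
  φ (shiftC x ω) - φ ω

/-- The squared `L²`-norm `𝔼(∑_x ω_{0,x} |u(ω,x)|²)` of a vector field. -/
def energy (P : Measure (Cfg d)) (u : Cfg d → V d → Fin d → ℝ) : ℝ≥0∞ :=
  ∫⁻ ω, ∑' x, ENNReal.ofReal (ω.w 0 x * rnorm (u ω x) ^ 2) ∂P

/-- The Dirichlet functional `φ ↦ 𝔼(∑_x ω_{0,x} |x + ∇_xφ(ω)|²)`. -/
def dirichlet (P : Measure (Cfg d)) (φ : Cfg d → (Fin d → ℝ)) : ℝ≥0∞ :=
  energy P fun ω x => toR x + grad φ ω x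

/-- The infimum of the Dirichlet functional over local functions. -/
def dirichletInf (P : Measure (Cfg d)) : ℝ≥0∞ :=
  ⨅ φ : {φ : Cfg d → Fin d → ℝ // IsLocal φ}, dirichlet P φ.1

/-- `χ` is the corrector for the environment law `P`: a shift-covariant measurable
function which is the `L²`-limit of the gradients of some minimizing sequence of the
Dirichlet functional. -/
def IsCorrector (P : Measure (Cfg d)) (χ : Cfg d → V d → Fin d → ℝ) : Prop :=
  (∀ x, Measurable fun ω => χ ω x) ∧
  (∀ ω, χ ω 0 = 0) ∧
  (∀ ω x z, χ ω (x + z) - χ ω x = χ (shiftC x ω) z) ∧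
  ∃ φs : ℕ → Cfg d → Fin d → ℝ,
    (∀ n, IsLocal (φs n)) ∧
    Tendsto (fun n => dirichlet P (φs n)) atTop (𝓝 (dirichletInf P)) ∧
    Tendsto (fun n => energy P fun ω x => grad (φs n) ω x - χ ω x) atTop (𝓝 0)

/-- The harmonic coordinate `Ψ(ω,x) := x + χ(ω,x)`. -/
def Psi (χ : Cfg d → V d → Fin d → ℝ) (ω : Cfg d) (x : V d) : Fin d → ℝ :=
  toR x + χ ω x

/-- The second-moment condition `𝔼(∑_x ω_{0,x}|x|²) < ∞`. -/
def SecondMoment (P : Measure (Cfg d)) : Prop :=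
  ∫⁻ ω, ∑' x, ENNReal.ofReal (ω.w 0 x * vnorm x ^ 2) ∂P < ⊤

/-- The inverse-moment condition `𝔼(1/ω_{0,x}) < ∞`. -/
def InvMoment (P : Measure (Cfg d)) (x : V d) : Prop :=
  ∫⁻ ω, (ENNReal.ofReal (ω.w 0 x))⁻¹ ∂P < ⊤

/-- The set `N` of admissible jumps of the walk (together with `0`). -/
def Nset (P : Measure (Cfg d)) : Set (V d) :=
  {x | 0 < P {ω | 0 < ω.w 0 x}} ∪ {0}

/-- The inner product `⟨u,v⟩ = 𝔼(∑_{x∈N} ω_{0,x} u(ω,x)·v(ω,x))` on vector fields. -/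
def iprodN (P : Measure (Cfg d)) (u v : Cfg d → V d → Fin d → ℝ) : ℝ :=
  ∫ ω, ∑' x : ↥(Nset P), ω.w 0 (x : V d) * ∑ i, u ω x i * v ω x i ∂P

/-- The squared norm `𝔼(∑_{x∈N} ω_{0,x}|u(ω,x)|²)` of a vector field. -/
def energyN (P : Measure (Cfg d)) (u : Cfg d → V d → Fin d → ℝ) : ℝ≥0∞ :=
  ∫⁻ ω, ∑' x : ↥(Nset P), ENNReal.ofReal (ω.w 0 (x : V d) * rnorm (u ω x) ^ 2) ∂P

/-- Membership in `L²_cov`: a measurable shift-covariant square-integrable vector field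
(vanishing at `x = 0`). -/
def MemL2cov (P : Measure (Cfg d)) (u : Cfg d → V d → Fin d → ℝ) : Prop :=
  (∀ x, Measurable fun ω => u ω x) ∧
  (∀ ω, u ω 0 = 0) ∧
  (∀ ω x z, x ∈ Nset P → z ∈ Nset P → x + z ∈ Nset P →
    u ω (x + z) - u ω x = u (shiftC x ω) z) ∧
  energyN P u < ⊤

/-- Membership in `L²_∇`, the closure in `L²_cov` of the gradients of local functions. -/
def InGradClosure (P : Measure (Cfg d)) (u : Cfg d → V d → Fin d → ℝ) : Prop :=
  MemL2cov P u ∧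
  ∃ φs : ℕ → Cfg d → Fin d → ℝ, (∀ n, IsLocal (φs n)) ∧
    Tendsto (fun n => energyN P fun ω x => u ω x - grad (φs n) ω x) atTop (𝓝 0)

/-- The divergence `div(ωu)(ω) = ∑_{x∈N} ω_{0,x}[u(ω,x) − u(τ_xω,−x)]`. -/
def divN (P : Measure (Cfg d)) (u : Cfg d → V d → Fin d → ℝ) (ω : Cfg d) : Fin d → ℝ :=
  ∑' x : ↥(Nset P), ω.w 0 (x : V d) • (u ω (x : V d) - u (shiftC (x : V d) ω) (-(x : V d)))

/-!
Write `S(ω) := ∑_{x∈N} ω_{0x} u(ω,x)` (`flux`). The antisymmetry `u(τ_xω, -x) = -u(ω,x)`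
gives `div(ωu) = 2 S`, and the shift invariance of `ℙ` combined with the reflection `x ↦ -x`
gives the integration by parts `⟨u, ∇φ⟩ = -2 𝔼[S ⬝ φ]` for bounded measurable `φ`. So if
`S = 0` a.s., `u` is orthogonal to every `∇φ`, and by continuity of `⟨u, ·⟩` to their closure
`L²_∇`. Conversely, orthogonality gives `𝔼[S_i g] = 0` for every bounded continuous local `g`;
by dominated convergence this extends to all bounded continuous functions of the configuration,
which determine finite measures, so `S = 0` a.s. Finally, since a.s. `ω_{x,x+z} = 0` for
`z ∉ N`, the increments of `U` give `∑_y ω_{xy} (U(ω,y) - U(ω,x)) = S(τ_xω)`, which vanishes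
for all `x` a.s.
-/

open scoped BoundedContinuousFunction

variable {P : Measure (Cfg d)}

theorem Cfg.ext' {ω ω' : Cfg d} (h : ω.w = ω'.w) : ω = ω' := by
  cases ω; cases ω'; simpa using h

@[simp] theorem shiftC_w (z : V d) (ω : Cfg d) (a b : V d) :
    (shiftC z ω).w a b = ω.w (a + z) (b + z) := rfl

@[simp] theorem shiftC_zero (ω : Cfg d) : shiftC 0 ω = ω :=
  Cfg.ext' <| by ext; simp

theorem shiftC_shiftC (x z : V d) (ω : Cfg d) :
    shiftC z (shiftC x ω) = shiftC (x + z) ω :=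
  Cfg.ext' <| by ext; simp [add_assoc, add_comm x z]

@[fun_prop]
theorem measurable_w (a b : V d) : Measurable fun ω : Cfg d => ω.w a b :=
  (measurable_pi_apply b).comp ((measurable_pi_apply a).comp (comap_measurable Cfg.w))

@[fun_prop]
theorem measurable_shiftC (z : V d) : Measurable (shiftC z : Cfg d → Cfg d) := by
  rintro _ ⟨B, hB, rfl⟩
  exact (measurable_pi_lambda _ fun a => measurable_pi_lambda _ fun b =>
    measurable_w (a + z) (b + z)) hB

def shiftMeasurableEquiv (z : V d) : Cfg d ≃ᵐ Cfg d where
  toFun := shiftC z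
  invFun := shiftC (-z)
  left_inv ω := by simp [shiftC_shiftC]
  right_inv ω := by simp [shiftC_shiftC]
  measurable_toFun := measurable_shiftC z
  measurable_invFun := measurable_shiftC (-z)

theorem integral_comp_shiftC (hP : UsualConds P) (z : V d) {E : Type*} [NormedAddCommGroup E]
    [NormedSpace ℝ E] (f : Cfg d → E) : ∫ ω, f (shiftC z ω) ∂P = ∫ ω, f ω ∂P :=
  (show MeasurePreserving (shiftMeasurableEquiv z) P P from hP.inv z).integral_comp' f

theorem ae_forall_shiftC (hP : UsualConds P) {p : Cfg d → Prop} (h : ∀ᵐ ω ∂P, p ω) :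
    ∀ᵐ ω ∂P, ∀ x, p (shiftC x ω) :=
  ae_all_iff.mpr fun x => (hP.inv x).quasiMeasurePreserving.ae h

theorem zero_mem_Nset : (0 : V d) ∈ Nset P := Or.inr rfl

theorem neg_mem_Nset (hP : UsualConds P) {x : V d} (hx : x ∈ Nset P) : -x ∈ Nset P := by
  rcases hx with hx | rfl
  · left
    have hpre : shiftC x ⁻¹' {ω | 0 < ω.w 0 (-x)} = {ω | 0 < ω.w 0 x} := by
      ext ω; simp [ω.symm x 0]
    rwa [Set.mem_ofPred_eq, ← (hP.inv x).measure_preimage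
      (measurableSet_lt measurable_const (measurable_w 0 (-x))).nullMeasurableSet, hpre]
  · simpa using zero_mem_Nset

theorem ae_w_eq_zero_of_notMem_Nset {x : V d} (hx : x ∉ Nset P) : ∀ᵐ ω ∂P, ω.w 0 x = 0 := by
  have : P {ω | 0 < ω.w 0 x} = 0 := by
    simpa [Nset, pos_iff_ne_zero] using (not_or.mp hx).1
  filter_upwards [measure_eq_zero_iff_ae_notMem.mp this] with ω hω
  exact le_antisymm (not_lt.mp hω) (ω.nonneg 0 x)

theorem ae_forall_notMem_Nset_w_eq_zero : ∀ᵐ ω ∂P, ∀ z ∉ Nset P, ω.w 0 z = 0 := by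
  refine ae_all_iff.mpr fun z => ?_
  by_cases hz : z ∈ Nset P
  · exact ae_of_all _ fun _ h => absurd hz h
  · filter_upwards [ae_w_eq_zero_of_notMem_Nset hz] with ω h _ using h

def Nset.negEquiv (hP : UsualConds P) : Nset P ≃ Nset P where
  toFun x := ⟨-x, neg_mem_Nset hP x.2⟩
  invFun x := ⟨-x, neg_mem_Nset hP x.2⟩
  left_inv _ := Subtype.ext (neg_neg _)
  right_inv _ := Subtype.ext (neg_neg _)

theorem rnorm_eq_norm (v : Fin d → ℝ) : rnorm v = ‖WithLp.toLp 2 v‖ := by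
  simp [rnorm, EuclideanSpace.norm_eq]

theorem rnorm_nonneg (v : Fin d → ℝ) : 0 ≤ rnorm v := Real.sqrt_nonneg _

@[fun_prop]
theorem continuous_rnorm : Continuous (rnorm : (Fin d → ℝ) → ℝ) := by
  unfold rnorm; fun_prop

theorem rnorm_sub_le (v w : Fin d → ℝ) : rnorm (v - w) ≤ rnorm v + rnorm w := by
  simpa only [rnorm_eq_norm, WithLp.toLp_sub] using norm_sub_le _ _

theorem norm_le_rnorm (v : Fin d → ℝ) : ‖v‖ ≤ rnorm v := by
  refine pi_norm_le_iff_of_nonneg (rnorm_nonneg v) |>.mpr fun i => ?_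
  simpa [rnorm_eq_norm] using PiLp.norm_apply_le (WithLp.toLp 2 v) i

theorem rnorm_pi_single (i : Fin d) (a : ℝ) : rnorm (Pi.single i a) = |a| := by
  simp [rnorm_eq_norm]

theorem abs_dotProduct_le (v w : Fin d → ℝ) : |v ⬝ᵥ w| ≤ rnorm v * rnorm w := by
  simpa [rnorm_eq_norm, EuclideanSpace.inner_toLp_toLp, dotProduct_comm] using
    abs_real_inner_le_norm (WithLp.toLp 2 v) (WithLp.toLp 2 w)

theorem mul_le_mul_sq_add_inv_mul_sq {t : ℝ} (ht : 0 < t) (a b : ℝ) :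
    a * b ≤ t * a ^ 2 + t⁻¹ * b ^ 2 := by
  have h : 0 ≤ t⁻¹ * (t * a - b) ^ 2 := by positivity
  have : t⁻¹ * (t * a - b) ^ 2 = t * a ^ 2 - 2 * (a * b) + t⁻¹ * b ^ 2 := by
    field_simp; ring
  nlinarith [mul_nonneg ht.le (sq_nonneg a), mul_nonneg (inv_nonneg.mpr ht.le) (sq_nonneg b)]

variable (P) in
def localEnergy (v : Cfg d → V d → Fin d → ℝ) (ω : Cfg d) : ℝ≥0∞ :=
  ∑' x : Nset P, ENNReal.ofReal (ω.w 0 x * rnorm (v ω x) ^ 2)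

variable (P) in
def FiniteEnergy (v : Cfg d → V d → Fin d → ℝ) : Prop :=
  (∀ x, Measurable fun ω => v ω x) ∧ energyN P v < ⊤

variable (P) in
def pairing (u v : Cfg d → V d → Fin d → ℝ) (ω : Cfg d) : ℝ :=
  ∑' x : Nset P, ω.w 0 x * (u ω x ⬝ᵥ v ω x)

theorem iprodN_eq_integral (u v : Cfg d → V d → Fin d → ℝ) :
    iprodN P u v = ∫ ω, pairing P u v ω ∂P := rfl

theorem MemL2cov.finiteEnergy {u : Cfg d → V d → Fin d → ℝ} (hu : MemL2cov P u) :
    FiniteEnergy P u :=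
  ⟨hu.1, hu.2.2.2⟩

theorem measurable_localEnergy {v : Cfg d → V d → Fin d → ℝ}
    (hv : ∀ x, Measurable fun ω => v ω x) : Measurable (localEnergy P v) :=
  Measurable.tsum fun x => by fun_prop

theorem FiniteEnergy.ae_localEnergy_ne_top {v : Cfg d → V d → Fin d → ℝ}
    (hv : FiniteEnergy P v) : ∀ᵐ ω ∂P, localEnergy P v ω ≠ ⊤ :=
  ae_lt_top (measurable_localEnergy hv.1) hv.2.ne |>.mono fun _ h => h.ne

theorem tsum_ofReal_w_le_piC (ω : Cfg d) :
    ∑' x : Nset P, ENNReal.ofReal (ω.w 0 x) ≤ ENNReal.ofReal (piC ω 0) := by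
  rw [piC, ENNReal.ofReal_tsum_of_nonneg (ω.nonneg 0) (ω.summ 0)]
  exact ENNReal.tsum_comp_le_tsum_of_injective Subtype.val_injective _

theorem finiteEnergy_of_bounded (hP : UsualConds P) {v : Cfg d → V d → Fin d → ℝ}
    (hv : ∀ x, Measurable fun ω => v ω x) {C : ℝ} (hC : ∀ ω x, rnorm (v ω x) ≤ C) :
    FiniteEnergy P v := by
  refine ⟨hv, ?_⟩
  have hle : ∀ ω, localEnergy P v ω ≤ ENNReal.ofReal (C ^ 2) * ENNReal.ofReal (piC ω 0) := by
    intro ω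
    calc localEnergy P v ω ≤ ∑' x : Nset P, ENNReal.ofReal (C ^ 2) * ENNReal.ofReal (ω.w 0 x) := by
          refine ENNReal.tsum_le_tsum fun x => ?_
          rw [← ENNReal.ofReal_mul (sq_nonneg C), mul_comm]
          gcongr
          · exact ω.nonneg _ _
          · exact rnorm_nonneg _
          · exact hC _ _
      _ ≤ _ := by rw [ENNReal.tsum_mul_left]; gcongr; exact tsum_ofReal_w_le_piC ω
  calc energyN P v ≤ ∫⁻ ω, ENNReal.ofReal (C ^ 2) * ENNReal.ofReal (piC ω 0) ∂P :=
        lintegral_mono hle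
    _ < ⊤ := by
        rw [lintegral_const_mul' _ _ ENNReal.ofReal_ne_top]
        exact ENNReal.mul_lt_top ENNReal.ofReal_lt_top hP.integ.lintegral_lt_top

theorem enorm_w_mul_dotProduct_le {w t : ℝ} (hw : 0 ≤ w) (ht : 0 < t) (v v' : Fin d → ℝ) :
    ‖w * (v ⬝ᵥ v')‖ₑ ≤ ENNReal.ofReal t * ENNReal.ofReal (w * rnorm v ^ 2) +
      ENNReal.ofReal t⁻¹ * ENNReal.ofReal (w * rnorm v' ^ 2) := by
  rw [Real.enorm_eq_ofReal_abs, ← ENNReal.ofReal_mul ht.le,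
    ← ENNReal.ofReal_mul (inv_nonneg.mpr ht.le),
    ← ENNReal.ofReal_add (by positivity) (by positivity)]
  refine ENNReal.ofReal_le_ofReal ?_
  rw [abs_mul, abs_of_nonneg hw]
  calc w * |v ⬝ᵥ v'| ≤ w * (rnorm v * rnorm v') := by gcongr; exact abs_dotProduct_le v v'
    _ ≤ w * (t * rnorm v ^ 2 + t⁻¹ * rnorm v' ^ 2) := by
        gcongr; exact mul_le_mul_sq_add_inv_mul_sq ht _ _
    _ = _ := by ring

theorem tsum_enorm_pairing_le (u v : Cfg d → V d → Fin d → ℝ) (ω : Cfg d) {t : ℝ} (ht : 0 < t) :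
    ∑' x : Nset P, ‖ω.w 0 x * (u ω x ⬝ᵥ v ω x)‖ₑ ≤
      ENNReal.ofReal t * localEnergy P u ω + ENNReal.ofReal t⁻¹ * localEnergy P v ω := by
  rw [localEnergy, localEnergy, ← ENNReal.tsum_mul_left, ← ENNReal.tsum_mul_left,
    ← ENNReal.tsum_add]
  exact ENNReal.tsum_le_tsum fun x => enorm_w_mul_dotProduct_le (ω.nonneg _ _) ht _ _

theorem enorm_pairing_le (u v : Cfg d → V d → Fin d → ℝ) (ω : Cfg d) {t : ℝ} (ht : 0 < t) :
    ‖pairing P u v ω‖ₑ ≤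
      ENNReal.ofReal t * localEnergy P u ω + ENNReal.ofReal t⁻¹ * localEnergy P v ω :=
  enorm_tsum_le_tsum_enorm.trans (tsum_enorm_pairing_le u v ω ht)

theorem summable_pairing {u v : Cfg d → V d → Fin d → ℝ} {ω : Cfg d}
    (hu : localEnergy P u ω ≠ ⊤) (hv : localEnergy P v ω ≠ ⊤) :
    Summable fun x : Nset P => ω.w 0 x * (u ω x ⬝ᵥ v ω x) :=
  Summable.of_enorm <| ne_top_of_le_ne_top (by simp [hu, hv]) (tsum_enorm_pairing_le u v ω one_pos)

theorem measurable_pairing {u v : Cfg d → V d → Fin d → ℝ} (hu : ∀ x, Measurable fun ω => u ω x)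
    (hv : ∀ x, Measurable fun ω => v ω x) : Measurable (pairing P u v) :=
  Measurable.tsum fun x => by fun_prop

theorem lintegral_enorm_pairing_le {u v : Cfg d → V d → Fin d → ℝ}
    (hu : ∀ x, Measurable fun ω => u ω x) {t : ℝ} (ht : 0 < t) :
    ∫⁻ ω, ‖pairing P u v ω‖ₑ ∂P ≤
      ENNReal.ofReal t * energyN P u + ENNReal.ofReal t⁻¹ * energyN P v := by
  calc ∫⁻ ω, ‖pairing P u v ω‖ₑ ∂P
      ≤ ∫⁻ ω, ENNReal.ofReal t * localEnergy P u ω + ENNReal.ofReal t⁻¹ * localEnergy P v ω ∂P :=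
        lintegral_mono fun ω => enorm_pairing_le u v ω ht
    _ = _ := by
        rw [lintegral_add_left ((measurable_localEnergy hu).const_mul _),
          lintegral_const_mul' _ _ ENNReal.ofReal_ne_top,
          lintegral_const_mul' _ _ ENNReal.ofReal_ne_top]
        rfl

theorem integrable_pairing {u v : Cfg d → V d → Fin d → ℝ} (hu : FiniteEnergy P u)
    (hv : FiniteEnergy P v) : Integrable (pairing P u v) P := by
  refine ⟨(measurable_pairing hu.1 hv.1).aestronglyMeasurable, ?_⟩
  refine (lintegral_enorm_pairing_le hu.1 one_pos).trans_lt ?_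
  simpa using ENNReal.add_lt_top.mpr ⟨hu.2, hv.2⟩

theorem iprodN_sub {u v v' : Cfg d → V d → Fin d → ℝ} (hu : FiniteEnergy P u)
    (hv : FiniteEnergy P v) (hv' : FiniteEnergy P v') :
    iprodN P u (fun ω x => v ω x - v' ω x) = iprodN P u v - iprodN P u v' := by
  rw [iprodN_eq_integral, iprodN_eq_integral, iprodN_eq_integral,
    ← integral_sub (integrable_pairing hu hv) (integrable_pairing hu hv')]
  refine integral_congr_ae ?_
  filter_upwards [hu.ae_localEnergy_ne_top, hv.ae_localEnergy_ne_top,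
    hv'.ae_localEnergy_ne_top] with ω hu hv hv'
  simp only [pairing, dotProduct_sub, mul_sub]
  exact (summable_pairing hu hv).tsum_sub (summable_pairing hu hv')

theorem enorm_iprodN_le {u v : Cfg d → V d → Fin d → ℝ} (hu : ∀ x, Measurable fun ω => u ω x)
    {t : ℝ} (ht : 0 < t) :
    ‖iprodN P u v‖ₑ ≤ ENNReal.ofReal t * energyN P u + ENNReal.ofReal t⁻¹ * energyN P v :=
  (enorm_integral_le_lintegral_enorm _).trans (lintegral_enorm_pairing_le hu ht)

theorem integral_pairing_eq_tsum {u v : Cfg d → V d → Fin d → ℝ} (hu : FiniteEnergy P u)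
    (hv : FiniteEnergy P v) :
    ∫ ω, pairing P u v ω ∂P = ∑' x : Nset P, ∫ ω, ω.w 0 x * (u ω x ⬝ᵥ v ω x) ∂P := by
  have hm : ∀ x : Nset P, Measurable fun ω => ω.w 0 x * (u ω x ⬝ᵥ v ω x) := by
    have := hu.1; have := hv.1; fun_prop
  refine integral_tsum (fun x => (hm x).aestronglyMeasurable) (LT.lt.ne ?_)
  rw [← lintegral_tsum fun x => (hm x).enorm.aemeasurable]
  calc ∫⁻ ω, ∑' x : Nset P, ‖ω.w 0 x * (u ω x ⬝ᵥ v ω x)‖ₑ ∂P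
      ≤ ∫⁻ ω, localEnergy P u ω + localEnergy P v ω ∂P :=
        lintegral_mono fun ω => by simpa using tsum_enorm_pairing_le u v ω one_pos
    _ < ⊤ := by
        rw [lintegral_add_left (measurable_localEnergy hu.1)]
        exact ENNReal.add_lt_top.mpr ⟨hu.2, hv.2⟩

variable (P) in
def flux (u : Cfg d → V d → Fin d → ℝ) (ω : Cfg d) : Fin d → ℝ :=
  ∑' x : Nset P, ω.w 0 x • u ω x

theorem MemL2cov.apply_shiftC_neg (hP : UsualConds P) {u : Cfg d → V d → Fin d → ℝ}
    (hu : MemL2cov P u) {x : V d} (hx : x ∈ Nset P) (ω : Cfg d) :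
    u (shiftC x ω) (-x) = -u ω x := by
  have h := hu.2.2.1 ω x (-x) hx (neg_mem_Nset hP hx) (by simpa using zero_mem_Nset)
  rw [add_neg_cancel, hu.2.1 ω] at h
  rw [← h, zero_sub]

theorem divN_eq_two_smul_flux (hP : UsualConds P) {u : Cfg d → V d → Fin d → ℝ}
    (hu : MemL2cov P u) (ω : Cfg d) : divN P u ω = (2 : ℝ) • flux P u ω := by
  rw [divN, flux, ← tsum_const_smul'']
  refine tsum_congr fun x => ?_
  rw [hu.apply_shiftC_neg hP x.2, sub_neg_eq_add, ← two_smul ℝ, smul_comm]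

theorem enorm_smul_le {w : ℝ} (hw : 0 ≤ w) (v : Fin d → ℝ) :
    ‖w • v‖ₑ ≤ ENNReal.ofReal w + ENNReal.ofReal (w * rnorm v ^ 2) := by
  rw [← ofReal_norm, norm_smul, Real.norm_of_nonneg hw,
    ← ENNReal.ofReal_add hw (by positivity)]
  refine ENNReal.ofReal_le_ofReal ?_
  have h := norm_le_rnorm v
  nlinarith [sq_nonneg (rnorm v - 1), norm_nonneg v]

theorem tsum_enorm_flux_le (u : Cfg d → V d → Fin d → ℝ) (ω : Cfg d) :
    ∑' x : Nset P, ‖ω.w 0 x • u ω x‖ₑ ≤ ENNReal.ofReal (piC ω 0) + localEnergy P u ω :=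
  calc ∑' x : Nset P, ‖ω.w 0 x • u ω x‖ₑ
      ≤ ∑' x : Nset P, (ENNReal.ofReal (ω.w 0 x) + ENNReal.ofReal (ω.w 0 x * rnorm (u ω x) ^ 2)) :=
        ENNReal.tsum_le_tsum fun x => enorm_smul_le (ω.nonneg 0 x) _
    _ ≤ _ := by
        rw [ENNReal.tsum_add]
        exact add_le_add_left (tsum_ofReal_w_le_piC ω) _

theorem summable_flux {u : Cfg d → V d → Fin d → ℝ} {ω : Cfg d} (h : localEnergy P u ω ≠ ⊤) :
    Summable fun x : Nset P => ω.w 0 x • u ω x :=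
  Summable.of_enorm <| ne_top_of_le_ne_top (by simp [h]) (tsum_enorm_flux_le u ω)

theorem integrable_flux (hP : UsualConds P) {u : Cfg d → V d → Fin d → ℝ}
    (hu : FiniteEnergy P u) : Integrable (flux P u) P := by
  have := hu.1
  refine ⟨(Measurable.tsum fun x => by fun_prop).aestronglyMeasurable, ?_⟩
  calc ∫⁻ ω, ‖flux P u ω‖ₑ ∂P ≤ ∫⁻ ω, ENNReal.ofReal (piC ω 0) + localEnergy P u ω ∂P :=
        lintegral_mono fun ω => enorm_tsum_le_tsum_enorm.trans (tsum_enorm_flux_le u ω)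
    _ < ⊤ := by
        rw [lintegral_add_right _ (measurable_localEnergy hu.1)]
        exact ENNReal.add_lt_top.mpr ⟨hP.integ.lintegral_lt_top, hu.2⟩

theorem _root_.Summable.tsum_dotProduct {ι n : Type*} [Fintype n] {f : ι → n → ℝ}
    (hf : Summable f) (c : n → ℝ) : (∑' i, f i) ⬝ᵥ c = ∑' i, f i ⬝ᵥ c := by
  simp only [dotProduct, tsum_apply hf, ← tsum_mul_right]
  exact (Summable.tsum_finsetSum fun j _ => (Pi.summable.mp hf j).mul_right _).symm

theorem pairing_const_eq_flux_dotProduct {u : Cfg d → V d → Fin d → ℝ} {ω : Cfg d}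
    (h : localEnergy P u ω ≠ ⊤) (c : Fin d → ℝ) :
    pairing P u (fun _ _ => c) ω = flux P u ω ⬝ᵥ c := by
  rw [pairing, flux, (summable_flux h).tsum_dotProduct]
  simp only [smul_dotProduct, smul_eq_mul]

theorem integral_w_mul_dotProduct_reflect (hP : UsualConds P) {u : Cfg d → V d → Fin d → ℝ}
    (hu : MemL2cov P u) (φ : Cfg d → Fin d → ℝ) {x : V d} (hx : x ∈ Nset P) :
    ∫ ω, ω.w 0 x * (u ω x ⬝ᵥ φ (shiftC x ω)) ∂P = -∫ ω, ω.w 0 (-x) * (u ω (-x) ⬝ᵥ φ ω) ∂P := by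
  rw [← integral_comp_shiftC hP (-x), ← integral_neg]
  congr 1 with ω
  have hu' := hu.apply_shiftC_neg hP (neg_mem_Nset hP hx) ω
  rw [neg_neg] at hu'
  simp only [shiftC_w, shiftC_shiftC, neg_add_cancel, shiftC_zero, zero_add, add_neg_cancel, hu',
    neg_dotProduct, mul_neg, ω.symm (-x) 0]

theorem iprodN_grad_eq (hP : UsualConds P) {u : Cfg d → V d → Fin d → ℝ} (hu : MemL2cov P u)
    {φ : Cfg d → Fin d → ℝ} (hφ : Measurable φ) {C : ℝ} (hC : ∀ ω, rnorm (φ ω) ≤ C) :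
    iprodN P u (grad φ) = -2 * ∫ ω, flux P u ω ⬝ᵥ φ ω ∂P := by
  set v : Cfg d → V d → Fin d → ℝ := fun ω x => φ (shiftC x ω)
  set v₀ : Cfg d → V d → Fin d → ℝ := fun ω _ => φ ω
  have hv : FiniteEnergy P v :=
    finiteEnergy_of_bounded hP (fun x => hφ.comp (measurable_shiftC x)) fun _ _ => hC _
  have hv₀ : FiniteEnergy P v₀ := finiteEnergy_of_bounded hP (fun _ => hφ) fun _ _ => hC _
  have hflux : iprodN P u v₀ = ∫ ω, flux P u ω ⬝ᵥ φ ω ∂P := by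
    refine integral_congr_ae ?_
    filter_upwards [hu.finiteEnergy.ae_localEnergy_ne_top] with ω h
    exact pairing_const_eq_flux_dotProduct h (φ ω)
  have hreflect : iprodN P u v = -iprodN P u v₀ := by
    rw [iprodN_eq_integral, iprodN_eq_integral, integral_pairing_eq_tsum hu.finiteEnergy hv,
      integral_pairing_eq_tsum hu.finiteEnergy hv₀]
    conv_rhs => rw [← (Nset.negEquiv hP).tsum_eq, ← tsum_neg]
    exact tsum_congr fun x => integral_w_mul_dotProduct_reflect hP hu φ x.2
  calc iprodN P u (grad φ) = iprodN P u fun ω x => v ω x - v₀ ω x := rfl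
    _ = -2 * ∫ ω, flux P u ω ⬝ᵥ φ ω ∂P := by
        rw [iprodN_sub hu.finiteEnergy hv hv₀, hreflect, hflux]; ring

theorem IsLocal.measurable {φ : Cfg d → Fin d → ℝ} (hφ : IsLocal φ) : Measurable φ := by
  obtain ⟨-, S, g, hg, hφ⟩ := hφ
  rw [funext hφ]
  refine hg.measurable.comp (measurable_pi_lambda _ fun e => ?_)
  by_cases he : e ∈ S <;> simp only [he, if_true, if_false] <;> fun_prop

theorem measurable_grad {φ : Cfg d → Fin d → ℝ} (hφ : Measurable φ) (x : V d) :
    Measurable fun ω => grad φ ω x :=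
  (hφ.comp (measurable_shiftC x)).sub hφ

theorem rnorm_grad_le {φ : Cfg d → Fin d → ℝ} {C : ℝ} (hC : ∀ ω, rnorm (φ ω) ≤ C)
    (ω : Cfg d) (x : V d) : rnorm (grad φ ω x) ≤ 2 * C := by
  unfold grad
  linarith [rnorm_sub_le (φ (shiftC x ω)) (φ ω), hC (shiftC x ω), hC ω]

theorem IsLocal.finiteEnergy_grad (hP : UsualConds P) {φ : Cfg d → Fin d → ℝ} (hφ : IsLocal φ) :
    FiniteEnergy P (grad φ) :=
  let ⟨⟨_, hC⟩, _⟩ := hφ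
  finiteEnergy_of_bounded hP (measurable_grad hφ.measurable) (rnorm_grad_le hC)

theorem iprodN_grad_eq_zero (hP : UsualConds P) {u : Cfg d → V d → Fin d → ℝ} (hu : MemL2cov P u)
    (hflux : ∀ᵐ ω ∂P, flux P u ω = 0) {φ : Cfg d → Fin d → ℝ} (hφ : IsLocal φ) :
    iprodN P u (grad φ) = 0 := by
  obtain ⟨C, hC⟩ := hφ.1
  rw [iprodN_grad_eq hP hu hφ.measurable hC, integral_eq_zero_of_ae, mul_zero]
  filter_upwards [hflux] with ω h
  simp [h]

theorem _root_.ENNReal.eq_zero_of_forall_le_ofReal_mul {a E : ℝ≥0∞} (hE : E ≠ ⊤)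
    (h : ∀ t : ℝ, 0 < t → a ≤ ENNReal.ofReal t * E) : a = 0 := by
  have hlim : Tendsto (fun t => ENNReal.ofReal t * E) (𝓝[>] 0) (𝓝 0) := by
    have h0 : Tendsto ENNReal.ofReal (𝓝[>] (0 : ℝ)) (𝓝 0) :=
      (ENNReal.continuous_ofReal.tendsto' 0 0 ENNReal.ofReal_zero).mono_left nhdsWithin_le_nhds
    simpa using ENNReal.Tendsto.mul_const h0 (Or.inr hE)
  exact nonpos_iff_eq_zero.mp (ge_of_tendsto hlim (eventually_nhdsWithin_of_forall h))

theorem iprodN_eq_zero_of_inGradClosure (hP : UsualConds P) {u : Cfg d → V d → Fin d → ℝ}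
    (hu : MemL2cov P u) (hflux : ∀ᵐ ω ∂P, flux P u ω = 0) {v : Cfg d → V d → Fin d → ℝ}
    (hv : InGradClosure P v) : iprodN P u v = 0 := by
  obtain ⟨hv, φs, hloc, htend⟩ := hv
  have hbound : ∀ n t, 0 < t → ‖iprodN P u v‖ₑ ≤ ENNReal.ofReal t * energyN P u +
      ENNReal.ofReal t⁻¹ * energyN P (fun ω x => v ω x - grad (φs n) ω x) := by
    intro n t ht
    have hsub := iprodN_sub hu.finiteEnergy hv.finiteEnergy ((hloc n).finiteEnergy_grad hP)
    rw [iprodN_grad_eq_zero hP hu hflux (hloc n), sub_zero] at hsub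
    exact hsub ▸ enorm_iprodN_le hu.1 ht
  refine enorm_eq_zero.mp (ENNReal.eq_zero_of_forall_le_ofReal_mul hu.2.2.2.ne fun t ht => ?_)
  have hlim : Tendsto (fun n => ENNReal.ofReal t * energyN P u + ENNReal.ofReal t⁻¹ *
      energyN P (fun ω x => v ω x - grad (φs n) ω x)) atTop
      (𝓝 (ENNReal.ofReal t * energyN P u)) := by
    simpa using tendsto_const_nhds.add
      (ENNReal.Tendsto.const_mul htend (Or.inr ENNReal.ofReal_ne_top))
  exact ge_of_tendsto hlim (Eventually.of_forall fun n => hbound n t ht)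

theorem _root_.MeasureTheory.integral_map_withDensity_ofReal {α X : Type*} [MeasurableSpace α]
    [TopologicalSpace X] [MeasurableSpace X] [OpensMeasurableSpace X] {m : α → X}
    (hm : Measurable m) {μ : Measure α} {G : α → ℝ} (hG : AEMeasurable G μ) (g : X →ᵇ ℝ) :
    ∫ x, g x ∂(μ.withDensity fun a => ENNReal.ofReal (G a)).map m =
      ∫ a, max (G a) 0 * g (m a) ∂μ := by
  rw [integral_map hm.aemeasurable g.continuous.aestronglyMeasurable,
    integral_withDensity_eq_integral_toReal_smul₀ hG.ennreal_ofReal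
      (ae_of_all _ fun _ => ENNReal.ofReal_lt_top)]
  simp only [ENNReal.toReal_ofReal', smul_eq_mul]

theorem _root_.Real.eq_zero_of_ofReal_eq_ofReal_neg {x : ℝ}
    (h : ENNReal.ofReal x = ENNReal.ofReal (-x)) : x = 0 := by
  rcases le_total x 0 with hx | hx
  · rw [ENNReal.ofReal_of_nonpos hx, eq_comm, ENNReal.ofReal_eq_zero] at h
    exact le_antisymm hx (neg_nonpos.mp h)
  · rw [ENNReal.ofReal_of_nonpos (neg_nonpos.mpr hx), ENNReal.ofReal_eq_zero] at h
    exact le_antisymm h hx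

theorem _root_.MeasureTheory.ae_eq_zero_of_forall_integral_mul_comp_eq_zero {α X : Type*}
    [mα : MeasurableSpace α] [TopologicalSpace X] [mX : MeasurableSpace X]
    [HasOuterApproxClosed X] [BorelSpace X] {m : α → X} (hm : mα = mX.comap m)
    {μ : Measure α} {F : α → ℝ} (hF : Integrable F μ)
    (h : ∀ g : X →ᵇ ℝ, ∫ a, F a * g (m a) ∂μ = 0) : F =ᵐ[μ] 0 := by
  -- The positive and negative parts of `F` are densities of two finite measures whose images
  -- under `m` integrate bounded continuous functions alike, hence coincide; as every measurable
  -- set is a preimage under `m`, the two measures themselves coincide.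
  have hmeas : Measurable m := Measurable.of_comap_le hm.ge
  have hpos := isFiniteMeasure_withDensity_ofReal hF.2
  have hneg := isFiniteMeasure_withDensity_ofReal (f := fun a => -F a) hF.neg.2
  have hbdd : ∀ G : α → ℝ, Integrable G μ → ∀ g : X →ᵇ ℝ,
      Integrable (fun a => G a * g (m a)) μ :=
    fun G hG g => hG.mul_bdd (g.continuous.measurable.comp hmeas).aestronglyMeasurable
      (ae_of_all _ fun a => g.norm_coe_le_norm (m a))
  have hmap_eq : (μ.withDensity fun a => ENNReal.ofReal (F a)).map m =
      (μ.withDensity fun a => ENNReal.ofReal (-F a)).map m := by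
    refine ext_of_forall_integral_eq_of_IsFiniteMeasure fun g => ?_
    rw [integral_map_withDensity_ofReal hmeas hF.aemeasurable,
      integral_map_withDensity_ofReal hmeas (G := fun a => -F a) hF.neg.aemeasurable, ← sub_eq_zero,
      ← integral_sub (hbdd _ hF.pos_part g) (hbdd (fun a => max (-F a) 0) hF.neg.pos_part g)]
    simpa only [← sub_mul, max_zero_sub_max_neg_zero_eq_self] using h g
  have hdens : (fun a => ENNReal.ofReal (F a)) =ᵐ[μ] fun a => ENNReal.ofReal (-F a) := by
    refine (withDensity_eq_iff hF.aemeasurable.ennreal_ofReal hF.neg.aemeasurable.ennreal_ofReal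
      hF.lintegral_lt_top.ne).mp <| Measure.ext fun s hs => ?_
    obtain ⟨t, ht, rfl⟩ : MeasurableSet[mX.comap m] s := hm ▸ hs
    rw [← Measure.map_apply hmeas ht, hmap_eq, Measure.map_apply hmeas ht]
    rfl
  filter_upwards [hdens] with a ha
  exact Real.eq_zero_of_ofReal_eq_ofReal_neg ha

theorem grad_add_sub_grad (φ : Cfg d → Fin d → ℝ) (ω : Cfg d) (x z : V d) :
    grad φ ω (x + z) - grad φ ω x = grad φ (shiftC x ω) z := by
  simp only [grad, shiftC_shiftC]
  abel

theorem inGradClosure_grad (hP : UsualConds P) {φ : Cfg d → Fin d → ℝ} (hφ : IsLocal φ) :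
    InGradClosure P (grad φ) := by
  refine ⟨⟨measurable_grad hφ.measurable, fun _ => by simp [grad],
    fun ω x z _ _ _ => grad_add_sub_grad φ ω x z, (hφ.finiteEnergy_grad hP).2⟩,
    fun _ => φ, fun _ => hφ, ?_⟩
  simp [energyN, rnorm]

theorem isLocal_pi_single (i : Fin d) (S : Finset (V d × V d)) {g : (V d × V d → ℝ) → ℝ}
    (hg : Continuous g) {C : ℝ} (hC : ∀ f, |g f| ≤ C) :
    IsLocal fun ω => Pi.single i (g fun e => if e ∈ S then ω.w e.1 e.2 else 0) :=
  ⟨⟨C, fun _ => (rnorm_pi_single i _).trans_le (hC _)⟩, S, fun f => Pi.single i (g f),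
    (continuous_single i).comp hg, fun _ => rfl⟩

theorem integral_flux_apply_mul_eq_zero (hP : UsualConds P) {u : Cfg d → V d → Fin d → ℝ}
    (hu : MemL2cov P u) (H : ∀ v, InGradClosure P v → iprodN P u v = 0) (i : Fin d)
    (S : Finset (V d × V d)) {g : (V d × V d → ℝ) → ℝ} (hg : Continuous g) {C : ℝ}
    (hC : ∀ f, |g f| ≤ C) :
    ∫ ω, flux P u ω i * g (fun e => if e ∈ S then ω.w e.1 e.2 else 0) ∂P = 0 := by
  have hφ := isLocal_pi_single i S hg hC
  have h := H _ (inGradClosure_grad hP hφ)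
  rw [iprodN_grad_eq hP hu hφ.measurable fun ω => (rnorm_pi_single i _).trans_le (hC _)] at h
  simpa [dotProduct_single] using h

theorem tendsto_ite_mem_finset_atTop {α β M : Type*} [DecidableEq α] [DecidableEq β]
    [TopologicalSpace M] [Zero M] (f : α → β → M) :
    Tendsto (fun E : Finset (α × β) => fun a b => if (a, b) ∈ E then f a b else 0)
      atTop (𝓝 f) :=
  tendsto_pi_nhds.mpr fun a => tendsto_pi_nhds.mpr fun b =>
    tendsto_const_nhds.congr' <| (eventually_ge_atTop {(a, b)}).mono fun E hE => by
      simp [Finset.singleton_subset_iff.mp hE]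

theorem integral_flux_apply_mul_comp_eq_zero (hP : UsualConds P)
    {u : Cfg d → V d → Fin d → ℝ} (hu : MemL2cov P u)
    (H : ∀ v, InGradClosure P v → iprodN P u v = 0) (i : Fin d) (G : (V d → V d → ℝ) →ᵇ ℝ) :
    ∫ ω, flux P u ω i * G ω.w ∂P = 0 := by
  have hflux := (integrable_flux hP hu.finiteEnergy).eval i
  have hmeas : ∀ E : Finset (V d × V d),
      Measurable fun ω : Cfg d => G fun a b => if (a, b) ∈ E then ω.w a b else 0 :=
    fun E => G.continuous.measurable.comp (measurable_pi_lambda _ fun a =>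
      measurable_pi_lambda _ fun b => by split_ifs <;> fun_prop)
  have hlim := tendsto_integral_filter_of_dominated_convergence (fun ω => ‖G‖ * ‖flux P u ω i‖)
    (l := atTop) (F := fun (E : Finset (V d × V d)) ω =>
      flux P u ω i * G fun a b => if (a, b) ∈ E then ω.w a b else 0)
    (Eventually.of_forall fun E => hflux.aestronglyMeasurable.mul (hmeas E).aestronglyMeasurable)
    (Eventually.of_forall fun E => ae_of_all _ fun ω => by
      rw [norm_mul, mul_comm]; gcongr; exact G.norm_coe_le_norm _)
    (hflux.norm.const_mul _)
    (ae_of_all _ fun ω => ((G.continuous.tendsto _).comp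
      (tendsto_ite_mem_finset_atTop ω.w)).const_mul _)
  refine tendsto_nhds_unique hlim (tendsto_const_nhds.congr fun E => ?_)
  exact (integral_flux_apply_mul_eq_zero hP hu H i E (g := fun f => G fun a b => f (a, b))
    (G.continuous.comp (by fun_prop)) fun f => G.norm_coe_le_norm _).symm

theorem flux_ae_eq_zero (hP : UsualConds P) {u : Cfg d → V d → Fin d → ℝ} (hu : MemL2cov P u)
    (H : ∀ v, InGradClosure P v → iprodN P u v = 0) : ∀ᵐ ω ∂P, flux P u ω = 0 := by
  have h : ∀ i, (fun ω => flux P u ω i) =ᵐ[P] 0 := fun i =>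
    ae_eq_zero_of_forall_integral_mul_comp_eq_zero (m := Cfg.w) rfl
      ((integrable_flux hP hu.finiteEnergy).eval i) (integral_flux_apply_mul_comp_eq_zero hP hu H i)
  filter_upwards [ae_all_iff.mpr h] with ω hω
  exact funext hω

theorem tsum_w_smul_sub_eq_flux_shiftC {u : Cfg d → V d → Fin d → ℝ} {U : V d → Fin d → ℝ}
    {ω : Cfg d} {x : V d} (hN : ∀ z ∉ Nset P, (shiftC x ω).w 0 z = 0)
    (hU : ∀ z ∈ Nset P, U (x + z) - U x = u (shiftC x ω) z) :
    ∑' y, ω.w x y • (U y - U x) = flux P u (shiftC x ω) := by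
  rw [← (Equiv.addLeft x).tsum_eq, flux, ← tsum_subtype_eq_of_support_subset (s := Nset P)]
  · refine tsum_congr fun z => ?_
    rw [Equiv.coe_addLeft, hU z z.2, shiftC_w, zero_add, add_comm]
  · intro z hz
    by_contra hzN
    refine hz ?_
    have h := hN z hzN
    rw [shiftC_w, zero_add, add_comm] at h
    simp [h]

theorem ae_harmonic_of_flux_eq_zero (hP : UsualConds P) {u : Cfg d → V d → Fin d → ℝ}
    (hflux : ∀ᵐ ω ∂P, flux P u ω = 0) {U : Cfg d → V d → Fin d → ℝ}
    (hU : ∀ ω x z, z ∈ Nset P → U ω (x + z) - U ω x = u (shiftC x ω) z) :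
    ∀ᵐ ω ∂P, ∀ x, ∑' y, ω.w x y • (U ω y - U ω x) = 0 := by
  filter_upwards [ae_forall_shiftC hP (hflux.and ae_forall_notMem_Nset_w_eq_zero)] with ω hω x
  rw [tsum_w_smul_sub_eq_flux_shiftC (hω x).2 (hU ω x), (hω x).1]

/-- (Weyl decomposition / characterization of the orthogonal complement)
Suppose `ℙ` satisfies the "usual conditions".  For `u ∈ L²_cov`, `u` is orthogonal to
`L²_∇` if and only if `div(ωu) = 0` `ℙ`-almost surely.  In particular, if `N` generates
`ℤ^d` and `U` is the extension of `u` to `ℤ^d` (with `U(ω,0) = 0` and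
`U(ω,x+z) − U(ω,x) = u(τ_xω,z)`), then `L_ω U(ω,·) = 0` everywhere, `ℙ`-a.s. -/
theorem statement5 {d : ℕ} (P : Measure (Cfg d)) (hP : UsualConds P)
    (u : Cfg d → V d → Fin d → ℝ) (hu : MemL2cov P u) :
    ((∀ v, InGradClosure P v → iprodN P u v = 0) ↔ (∀ᵐ ω ∂P, divN P u ω = 0)) ∧
    ((∀ v, InGradClosure P v → iprodN P u v = 0) →
      AddSubgroup.closure (Nset P) = ⊤ →
      ∀ U : Cfg d → V d → Fin d → ℝ,
        (∀ ω, U ω 0 = 0) →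
        (∀ ω x z, z ∈ Nset P → U ω (x + z) - U ω x = u (shiftC x ω) z) →
        ∀ᵐ ω ∂P, ∀ x : V d, (∑' y, ω.w x y • (U ω y - U ω x)) = 0) := by
  have hdiv : (∀ᵐ ω ∂P, divN P u ω = 0) ↔ ∀ᵐ ω ∂P, flux P u ω = 0 := by
    simp only [divN_eq_two_smul_flux hP hu, smul_eq_zero, two_ne_zero, false_or]
  refine ⟨⟨fun H => hdiv.mpr (flux_ae_eq_zero hP hu H),
    fun h v hv => iprodN_eq_zero_of_inGradClosure hP hu (hdiv.mp h) hv⟩, ?_⟩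
  intro H _ U _ hU
  exact ae_harmonic_of_flux_eq_zero hP (flux_ae_eq_zero hP hu H) hU

end RCM
end
end

section
/- Let d ≥ 1, fix ε > 0 and K < ∞, and let χ: ℤ^d → ℝ^d be any function. Call a vertex x ∈ ℤ^d (K,ε)-good if |χ(x + nê) − χ(x)| ≤ K + ε|n| for every n ∈ ℤ and every coordinate unit vector ê ∈ {ê_1,…,ê_d}, and let 𝔾 denote the set of (K,ε)-good vertices. Then for each n ≥ 1 there exists a set A ⊂ 𝔾 ∩ Λ_n, where Λ_n := [−n,n]^d ∩ ℤ^d, with the properties: |A| ≥ (2^dη − 2^d + 1)|Λ_n|, where η := |𝔾 ∩ Λ_n|/|Λ_n|, and |χ(y) − χ(x)| ≤ 2d[K + ε(2n+1)] for all x,y ∈ A. -/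
/-! Fix a reference vertex `w ∈ Λ_n` and walk from `w` to `x ∈ Λ_n` by correcting one coordinate
at a time, the `k`-th vertex of the walk taking its first `k` coordinates from `x` and the others
from `w`. If the vertices `k = 1, …, d` of the walk are good, each step moves `χ` by at most
`K + ε(2n+1)`, so `χ x` lies within `d(K + ε(2n+1))` of `χ w`, and the vertices `x` with this
property have `χ`-diameter at most `2d(K + ε(2n+1))`.

For each `k`, swapping the first `k` coordinates of `x` and `w` is an involution of `Λ_n × Λ_n`
mapping the pairs whose walk has a bad `k`-th vertex onto the pairs with `x` bad. Hence, averaged over `w`, at most `d |Λ_n ∖ 𝔾|`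
vertices `x` have a walk through a bad vertex; for a `w` at or below the average, the remaining
`x` form `A` (they are good, being the last vertex of their walk), and `d ≤ 2^d`. -/

open Set

noncomputable section

namespace RCM

/-- The box `Λ_n = [−n,n]^d ∩ ℤ^d`. -/
def box (d n : ℕ) : Set (V d) := {x | ∀ i, |x i| ≤ (n : ℤ)}

/-- The set of `(K,ε)`-good vertices for the function `χ`: those `x` with
`|χ(x + nê) − χ(x)| ≤ K + ε|n|` for every `n ∈ ℤ` and every coordinate direction `ê`. -/
def goodSet {d : ℕ} (K ε : ℝ) (χ : V d → Fin d → ℝ) : Set (V d) :=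
  {x | ∀ (m : ℤ) (i : Fin d), rnorm (χ (x + m • unit i) - χ x) ≤ K + ε * |(m : ℝ)|}

open Finset

lemma rnorm_sub_eq_dist {d : ℕ} (a b : Fin d → ℝ) :
    rnorm (a - b) = dist (WithLp.toLp 2 a) (WithLp.toLp 2 b) := by
  simp [rnorm, EuclideanSpace.dist_eq, Real.dist_eq, sq_abs]

def splice {α : Type*} {d : ℕ} (x w : Fin d → α) (k : ℕ) : Fin d → α :=
  fun i => if (i : ℕ) < k then x i else w i

section Splice

variable {α : Type*} {d : ℕ}

@[simp]
lemma splice_zero (x w : Fin d → α) : splice x w 0 = w := by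
  funext i; simp [splice]

@[simp]
lemma splice_dim (x w : Fin d → α) : splice x w d = x := by
  funext i; simp [splice, i.isLt]

@[simp]
lemma splice_splice (x w : Fin d → α) (k : ℕ) : splice (splice x w k) (splice w x k) k = x := by
  funext i; by_cases h : (i : ℕ) < k <;> simp [splice, h]

lemma splice_mem_piFinset {s : Fin d → Finset α} {x w : Fin d → α}
    (hx : x ∈ Fintype.piFinset s) (hw : w ∈ Fintype.piFinset s) (k : ℕ) :
    splice x w k ∈ Fintype.piFinset s := by
  rw [Fintype.mem_piFinset] at *
  intro i
  unfold splice
  split_ifs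
  exacts [hx i, hw i]

lemma splice_eq_add_smul_unit (x w : V d) {k : ℕ} (hk : k < d) :
    splice x w k = splice x w (k + 1) + (w ⟨k, hk⟩ - x ⟨k, hk⟩) • unit ⟨k, hk⟩ := by
  funext i
  by_cases hi : i = ⟨k, hk⟩
  · subst hi
    simp [splice, unit]
  · have hik : (i : ℕ) ≠ k := fun h => hi (Fin.ext h)
    simp only [splice, unit, Pi.add_apply, Pi.smul_apply, smul_eq_mul, if_neg hi, mul_zero,
      add_zero]
    split_ifs <;> first | rfl | omega

end Splice

lemma coe_piFinset_Icc (d n : ℕ) :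
    ((Fintype.piFinset fun _ => Finset.Icc (-(n : ℤ)) n : Finset (V d)) : Set (V d)) = box d n := by
  ext x
  simp only [mem_coe, Fintype.mem_piFinset, Finset.mem_Icc, box, Set.mem_ofPred_eq, abs_le]

lemma abs_sub_le_of_mem_box {d n : ℕ} {x y : V d} (hx : x ∈ box d n) (hy : y ∈ box d n)
    (i : Fin d) : |(y i : ℝ) - x i| ≤ 2 * n := by
  have hxi : |(x i : ℝ)| ≤ n := by exact_mod_cast hx i
  have hyi : |(y i : ℝ)| ≤ n := by exact_mod_cast hy i
  linarith [abs_sub (y i : ℝ) (x i)]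

lemma dist_le_of_splice_mem_goodSet {d : ℕ} {K ε L : ℝ} (hε : 0 ≤ ε) {χ : V d → Fin d → ℝ}
    {x w : V d} (hxw : ∀ i, |(w i : ℝ) - x i| ≤ L)
    (hgood : ∀ k ∈ Finset.Icc 1 d, splice x w k ∈ goodSet K ε χ) :
    dist (WithLp.toLp 2 (χ w)) (WithLp.toLp 2 (χ x)) ≤ d * (K + ε * L) := by
  set f : ℕ → EuclideanSpace ℝ (Fin d) := fun k => WithLp.toLp 2 (χ (splice x w k))
  have hstep : ∀ k ∈ range d, dist (f k) (f (k + 1)) ≤ K + ε * L := by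
    intro k hk
    have hk : k < d := mem_range.mp hk
    have h := hgood (k + 1) (mem_Icc.mpr ⟨by omega, hk⟩) (w ⟨k, hk⟩ - x ⟨k, hk⟩) ⟨k, hk⟩
    rw [← splice_eq_add_smul_unit, rnorm_sub_eq_dist] at h
    refine h.trans ?_
    push_cast
    gcongr
    exact hxw _
  calc dist (WithLp.toLp 2 (χ w)) (WithLp.toLp 2 (χ x)) = dist (f 0) (f d) := by simp [f]
    _ ≤ ∑ k ∈ range d, dist (f k) (f (k + 1)) := dist_le_range_sum_dist f d
    _ ≤ ∑ _k ∈ range d, (K + ε * L) := sum_le_sum hstep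
    _ = d * (K + ε * L) := by simp [mul_add]

section Counting

variable {α : Type*} {d : ℕ} (s : Fin d → Finset α) (G : Set (Fin d → α)) [DecidablePred (· ∈ G)]

lemma card_filter_splice_not_mem (k : ℕ) :
    #{z ∈ Fintype.piFinset s ×ˢ Fintype.piFinset s | splice z.1 z.2 k ∉ G}
      = #{x ∈ Fintype.piFinset s | x ∉ G} * #(Fintype.piFinset s) := by
  rw [← card_product, ← filter_product_left]
  refine card_bij' (fun z _ => (splice z.1 z.2 k, splice z.2 z.1 k))
    (fun z _ => (splice z.1 z.2 k, splice z.2 z.1 k)) ?_ ?_ ?_ ?_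
  all_goals
    intro z hz
    simp only [mem_filter, mem_product] at hz
  · exact mem_filter.mpr ⟨mem_product.mpr ⟨splice_mem_piFinset hz.1.1 hz.1.2 k,
      splice_mem_piFinset hz.1.2 hz.1.1 k⟩, hz.2⟩
  · exact mem_filter.mpr ⟨mem_product.mpr ⟨splice_mem_piFinset hz.1.1 hz.1.2 k,
      splice_mem_piFinset hz.1.2 hz.1.1 k⟩, by simpa using hz.2⟩
  all_goals simp

lemma exists_sum_card_filter_splice_not_mem_le (I : Finset ℕ)
    (hs : (Fintype.piFinset s).Nonempty) :
    ∃ w ∈ Fintype.piFinset s, ∑ k ∈ I, #{x ∈ Fintype.piFinset s | splice x w k ∉ G}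
      ≤ #I * #{x ∈ Fintype.piFinset s | x ∉ G} := by
  refine exists_le_of_sum_le hs (le_of_eq ?_)
  set B := Fintype.piFinset s
  calc ∑ w ∈ B, ∑ k ∈ I, #{x ∈ B | splice x w k ∉ G}
      = ∑ k ∈ I, ∑ w ∈ B, #{x ∈ B | splice x w k ∉ G} := sum_comm
    _ = ∑ k ∈ I, #{z ∈ B ×ˢ B | splice z.1 z.2 k ∉ G} := by
        simp only [card_filter, sum_product_right]
    _ = ∑ _w ∈ B, #I * #{x ∈ B | x ∉ G} := by
        rw [sum_congr rfl fun k _ => card_filter_splice_not_mem s G k]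
        simp only [sum_const, smul_eq_mul]
        ring

lemma exists_large_subset_forall_splice_mem [DecidableEq α]
    (hs : (Fintype.piFinset s).Nonempty) :
    ∃ w ∈ Fintype.piFinset s, ∃ A ⊆ Fintype.piFinset s,
      (∀ x ∈ A, ∀ k ∈ Finset.Icc 1 d, splice x w k ∈ G) ∧
      #(Fintype.piFinset s) ≤ #A + d * #{x ∈ Fintype.piFinset s | x ∉ G} := by
  obtain ⟨w, hw, hsum⟩ := exists_sum_card_filter_splice_not_mem_le s G (Finset.Icc 1 d) hs
  rw [Nat.card_Icc, Nat.add_sub_cancel] at hsum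
  let P x := ∀ k ∈ Finset.Icc 1 d, splice x w k ∈ G
  refine ⟨w, hw, (Fintype.piFinset s).filter P, filter_subset _ _,
    fun x hx => (mem_filter.mp hx).2, ?_⟩
  have hbad : {x ∈ Fintype.piFinset s | ¬P x}
      ⊆ (Finset.Icc 1 d).biUnion fun k => {x ∈ Fintype.piFinset s | splice x w k ∉ G} := by
    intro x hx
    simp only [P, mem_filter, not_forall, exists_prop] at hx
    obtain ⟨hxB, k, hk, hbad⟩ := hx
    exact mem_biUnion.mpr ⟨k, hk, mem_filter.mpr ⟨hxB, hbad⟩⟩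
  have hcard := (Finset.card_le_card hbad).trans (card_biUnion_le.trans hsum)
  rw [← card_filter_add_card_filter_not (s := Fintype.piFinset s) P]
  omega

end Counting

lemma ncard_inter_coe_finset {α : Type*} (G : Set α) [DecidablePred (· ∈ G)] (B : Finset α) :
    (G ∩ ↑B).ncard = #{x ∈ B | x ∈ G} := by
  rw [← ncard_coe_finset, coe_filter, Set.inter_comm]
  rfl

lemma two_pow_mul_density_sub_mul_le {d N g b a : ℕ} (hgb : g + b = N) (hN : N ≤ a + d * b) :
    ((2 : ℝ) ^ d * ((g : ℝ) / N) - 2 ^ d + 1) * N ≤ a := by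
  rcases N.eq_zero_or_pos with rfl | hN₀
  · simp
  have hd : (d : ℝ) ≤ 2 ^ d := by exact_mod_cast Nat.lt_two_pow_self.le
  have hgb' : (g : ℝ) + b = N := by exact_mod_cast hgb
  have hN' : (N : ℝ) ≤ a + d * b := by exact_mod_cast hN
  have hdb : (d : ℝ) * b ≤ 2 ^ d * b := by gcongr
  calc ((2 : ℝ) ^ d * ((g : ℝ) / N) - 2 ^ d + 1) * N = N - 2 ^ d * b := by
        field_simp
        linear_combination (2 : ℝ) ^ d * hgb'
    _ ≤ a := by linarith

theorem statement13_general {d : ℕ} (hd : 1 ≤ d) (ε K : ℝ) (hε : 0 < ε)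
    (χ : V d → Fin d → ℝ) (n : ℕ) :
    ∃ A : Set (V d),
      A ⊆ goodSet K ε χ ∩ box d n ∧
      ((2:ℝ) ^ d * (((goodSet K ε χ ∩ box d n).ncard : ℝ) / ((box d n).ncard : ℝ))
          - 2 ^ d + 1) * ((box d n).ncard : ℝ) ≤ (A.ncard : ℝ) ∧
      ∀ x ∈ A, ∀ y ∈ A, rnorm (χ y - χ x) ≤ 2 * d * (K + ε * (2 * n + 1)) := by
  classical
  obtain ⟨w, hwB, A, hAB, hA, hcard⟩ := exists_large_subset_forall_splice_mem
    (fun _ : Fin d => Finset.Icc (-(n : ℤ)) n) (goodSet K ε χ) ⟨0, by simp⟩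
  generalize hB : Fintype.piFinset (fun _ : Fin d => Finset.Icc (-(n : ℤ)) n) = B at hwB hAB hcard
  have hBbox : (B : Set (V d)) = box d n := hB ▸ coe_piFinset_Icc d n
  have hbox : ∀ x ∈ B, x ∈ box d n := fun x hx => hBbox ▸ mem_coe.mpr hx
  refine ⟨A, fun x hx => ⟨by simpa using hA x hx d (mem_Icc.mpr ⟨hd, le_rfl⟩), hbox x (hAB hx)⟩,
    ?_, fun x hx y hy => ?_⟩
  · rw [← hBbox, ncard_inter_coe_finset, ncard_coe_finset, ncard_coe_finset]
    exact two_pow_mul_density_sub_mul_le (card_filter_add_card_filter_not _) hcard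
  · have hdist : ∀ z ∈ A, dist (WithLp.toLp 2 (χ w)) (WithLp.toLp 2 (χ z))
        ≤ d * (K + ε * (2 * n + 1)) := fun z hz =>
      dist_le_of_splice_mem_goodSet hε.le
        (fun i => (abs_sub_le_of_mem_box (hbox z (hAB hz)) (hbox w hwB) i).trans (by linarith))
        (hA z hz)
    rw [rnorm_sub_eq_dist]
    calc _ ≤ dist (WithLp.toLp 2 (χ w)) (WithLp.toLp 2 (χ y))
          + dist (WithLp.toLp 2 (χ w)) (WithLp.toLp 2 (χ x)) := dist_triangle_left _ _ _
      _ ≤ d * (K + ε * (2 * n + 1)) + d * (K + ε * (2 * n + 1)) :=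
          add_le_add (hdist y hy) (hdist x hx)
      _ = 2 * d * (K + ε * (2 * n + 1)) := by ring

/-- (Deterministic pigeon-hole lemma for good vertices)
Let `d ≥ 1`, `ε > 0`, `K < ∞`, and let `χ : ℤ^d → ℝ^d` be arbitrary.  Then for each
`n ≥ 1` there is a set `A ⊆ 𝔾 ∩ Λ_n` of `(K,ε)`-good vertices in the box `Λ_n` with
`|A| ≥ (2^dη − 2^d + 1)|Λ_n|`, where `η = |𝔾 ∩ Λ_n|/|Λ_n|`, such that
`|χ(y) − χ(x)| ≤ 2d[K + ε(2n+1)]` for all `x, y ∈ A`. -/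
theorem statement13 {d : ℕ} (hd : 1 ≤ d) (ε K : ℝ) (hε : 0 < ε)
    (χ : V d → Fin d → ℝ) (n : ℕ) (hn : 1 ≤ n) :
    ∃ A : Set (V d),
      A ⊆ goodSet K ε χ ∩ box d n ∧
      ((2:ℝ) ^ d * (((goodSet K ε χ ∩ box d n).ncard : ℝ) / ((box d n).ncard : ℝ))
          - 2 ^ d + 1) * ((box d n).ncard : ℝ) ≤ (A.ncard : ℝ) ∧
      ∀ x ∈ A, ∀ y ∈ A, rnorm (χ y - χ x) ≤ 2 * d * (K + ε * (2 * n + 1)) :=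
  statement13_general hd ε K hε χ n

end RCM
end
end
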